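/- arXiv:2404.14101 — 2 statements merged into one kernel-verified Lean document; each statement's English description precedes it below -/
import Mathlib

section
/- For n = 3 with coefficients c₀ = (1 + (√2 - 1)i)/4, c₁ = (1 - (√2 + 1)i)/4, c₂ = ((1 + √2) + i)/4, c₃ = ((1 - √2) + i)/4, the polynomial p₃(s) = c₀·s₀ + c₁·s₁ + c₂·s₂ + c₃·s₀·s₁·s₂ takes, as s = (s₀, s₁, s₂) ranges over {±1}³, exactly the eight values e^{iπk/4}, k = 0, ..., 7, each attained exactly once. -/
/-!
With `ζ = e^{2πi/8} = (√2/2)(1 + i)`, a direct computation using only `√2² = 2` and `i² = -1`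
shows that `p₃` sends the eight sign vectors, suitably enumerated, to `ζ⁰, …, ζ⁷`. These powers
are pairwise distinct because `ζ` is a primitive eighth root of unity, so `p₃` is injective on
`{±1}³` with image exactly the eighth roots of unity.
-/

open Complex Real Set

theorem Set.bijOn_range_of_injective_comp {ι α β : Type*} {f : ι → α} {g : α → β}
    (h : Function.Injective (g ∘ f)) : BijOn g (range f) (range (g ∘ f)) := by
  simpa only [range_comp] using h.injOn_range.bijOn_image

noncomputable def phasePoly3 (s : Fin 3 → ℝ) : ℂ :=
  ((1 + (√2 - 1) * I) / 4) * (s 0 : ℝ) +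
  ((1 - (√2 + 1) * I) / 4) * (s 1 : ℝ) +
  (((1 + √2) + I) / 4) * (s 2 : ℝ) +
  (((1 - √2) + I) / 4) * ((s 0 : ℝ) * (s 1 : ℝ) * (s 2 : ℝ))

def phaseSigns : Fin 8 → Fin 3 → ℝ :=
  ![![1, 1, 1], ![1, -1, 1], ![-1, -1, 1], ![1, -1, -1],
    ![-1, -1, -1], ![-1, 1, -1], ![1, 1, -1], ![-1, 1, 1]]

theorem exp_two_pi_I_div_eight : cexp (2 * π * I / 8) = √2 / 2 * (1 + I) := by
  have h : 2 * (π : ℂ) * I / 8 = ((π / 4 : ℝ) : ℂ) * I := by push_cast; ring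
  rw [h, exp_mul_I, ← ofReal_cos, ← ofReal_sin, Real.cos_pi_div_four, Real.sin_pi_div_four]
  push_cast
  ring

theorem phasePoly3_phaseSigns (k : Fin 8) :
    phasePoly3 (phaseSigns k) = cexp (2 * π * I / 8) ^ (k : ℕ) := by
  have hsqrt : (√2 : ℂ) * √2 = 2 := by
    exact_mod_cast Real.mul_self_sqrt zero_le_two
  rw [exp_two_pi_I_div_eight]
  fin_cases k <;>
    simp only [phasePoly3, phaseSigns, Fin.isValue, Fin.reduceFinMk, Fin.zero_eta, Fin.mk_one,
      Matrix.cons_val, Matrix.cons_val_zero, Matrix.cons_val_one, ofReal_one, ofReal_neg] <;>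
    grind [I_mul_I]

theorem setOf_forall_eq_one_or_eq_neg_one_eq_range_phaseSigns :
    {s : Fin 3 → ℝ | ∀ i, s i = 1 ∨ s i = -1} = range phaseSigns := by
  ext s
  constructor
  · intro hs
    have hs' : s = ![s 0, s 1, s 2] := by ext i; fin_cases i <;> rfl
    rw [hs']
    rcases hs 0 with h0 | h0 <;> rcases hs 1 with h1 | h1 <;> rcases hs 2 with h2 | h2 <;>
      simp [h0, h1, h2, phaseSigns]
  · rintro ⟨k, rfl⟩ i
    fin_cases k <;> fin_cases i <;> simp [phaseSigns]

theorem setOf_exists_lt_eq_cexp_eq_range_pow (n : ℕ) :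
    {z : ℂ | ∃ k : ℕ, k < n ∧ z = cexp (2 * π * I * k / n)} =
      range fun k : Fin n => cexp (2 * π * I / n) ^ (k : ℕ) := by
  have hpow (k : ℕ) : cexp (2 * π * I * k / n) = cexp (2 * π * I / n) ^ k := by
    rw [← Complex.exp_nat_mul]; ring_nf
  ext z
  simp only [mem_ofPred_eq, mem_range, hpow, Fin.exists_iff, eq_comm (a := z), exists_prop]

theorem injective_fin_cexp_two_pi_I_div_pow (n : ℕ) :
    Function.Injective fun k : Fin n => cexp (2 * π * I / n) ^ (k : ℕ) := by
  rcases n.eq_zero_or_pos with rfl | hn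
  · exact fun k => k.elim0
  · exact fun i j h => Fin.ext <| (isPrimitiveRoot_exp n hn.ne').pow_inj i.2 j.2 h

/-- The `n = 3` phase-encoding polynomial is a bijection from `{±1}³` onto the
eighth roots of unity `e^{2πik/8}`, `k = 0, …, 7`, each attained exactly once. -/
theorem phase_encoding_three :
    Set.BijOn
      (fun s : Fin 3 → ℝ =>
        ((1 + (Real.sqrt 2 - 1) * Complex.I) / 4) * (s 0 : ℝ) +
        ((1 - (Real.sqrt 2 + 1) * Complex.I) / 4) * (s 1 : ℝ) +
        (((1 + Real.sqrt 2) + Complex.I) / 4) * (s 2 : ℝ) +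
        (((1 - Real.sqrt 2) + Complex.I) / 4) * ((s 0 : ℝ) * (s 1 : ℝ) * (s 2 : ℝ)))
      {s : Fin 3 → ℝ | ∀ i, s i = 1 ∨ s i = -1}
      {z : ℂ | ∃ k : ℕ, k < 8 ∧ z = Complex.exp (2 * Real.pi * Complex.I * k / 8)} := by
  have hcomp : phasePoly3 ∘ phaseSigns = fun k : Fin 8 => cexp (2 * π * I / 8) ^ (k : ℕ) :=
    funext phasePoly3_phaseSigns
  have hroots := setOf_exists_lt_eq_cexp_eq_range_pow 8
  have hinj := injective_fin_cexp_two_pi_I_div_pow 8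
  push_cast at hroots hinj
  rw [setOf_forall_eq_one_or_eq_neg_one_eq_range_phaseSigns, hroots, ← hcomp]
  exact bijOn_range_of_injective_comp (hcomp ▸ hinj)
end

section
/- For every positive integer n, there exists a function p from {±1}ⁿ to ℂ of the form p(s) = Σ_{T} c_T · Π_{j ∈ T} s_j, where T ranges over a family of 2^{n-1} subsets of {0, ..., n-1} (namely the subsets of odd size), such that p is a bijection from {±1}ⁿ onto the set of 2ⁿ-th roots of unity {e^{2πik/2ⁿ} : k = 0, ..., 2ⁿ - 1}. -/
/-!
Every function `f` on the cube `{±1}ⁿ` is a multilinear polynomial, with Walsh–Fourier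
coefficients `c_T = 2⁻ⁿ ∑_s f s ∏_{j ∈ T} s_j`, and if `f (-s) = -f s` then every coefficient
with `|T|` even vanishes. So it suffices to find a bijection from `{±1}ⁿ` onto the `2ⁿ`-th
roots of unity that is odd. Write the points of the cube as bit vectors and send `σ` to
`ζ ^ k`, where `ζ` is a primitive `2ⁿ`-th root of unity and `k` has binary digits
`σ₀ + σₙ₋₁, …, σₙ₋₂ + σₙ₋₁, σₙ₋₁` (mod 2). Flipping all bits leaves the low digits alone and
flips the top one, i.e. multiplies `ζ ^ k` by `ζ ^ 2ⁿ⁻¹ = -1`.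
-/

open Finset Function

namespace WalshFourier

section SignVec

variable {ι K : Type*} [CommRing K]

def signVec (σ : ι → Fin 2) (j : ι) : K := (-1) ^ (σ j : ℕ)

lemma signVec_add_one (σ : ι → Fin 2) (j : ι) :
    signVec (K := K) (σ + 1) j = -signVec σ j := by
  simp only [signVec, Pi.add_apply, Pi.one_apply]
  generalize σ j = x
  fin_cases x <;> simp

lemma range_signVec :
    Set.range (signVec (ι := ι) (K := K)) = {s | ∀ i, s i = 1 ∨ s i = -1} := by
  ext s
  constructor
  · rintro ⟨σ, rfl⟩ i
    simp only [signVec]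
    generalize σ i = x
    fin_cases x <;> simp
  · intro hs
    classical
    refine ⟨fun i => if s i = 1 then 0 else 1, funext fun i => ?_⟩
    rcases hs i with h | h
    · simp [signVec, h]
    · by_cases h1 : (-1 : K) = 1 <;> simp [signVec, h, h1]

lemma one_add_signVec_mul_signVec (σ τ : ι → Fin 2) (j : ι) :
    1 + signVec (K := K) σ j * signVec τ j = if σ j = τ j then 2 else 0 := by
  simp only [signVec]
  generalize σ j = x
  generalize τ j = y
  fin_cases x <;> fin_cases y <;> norm_num

lemma sum_prod_signVec_mul_signVec [Fintype ι] (σ τ : ι → Fin 2) :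
    ∑ T : Finset ι, ∏ j ∈ T, signVec (K := K) σ j * signVec τ j =
      if σ = τ then 2 ^ Fintype.card ι else 0 := by
  rw [← powerset_univ, ← prod_one_add]
  simp_rw [one_add_signVec_mul_signVec, prod_ite_zero, prod_const, card_univ]
  simp [funext_iff]

end SignVec

variable {ι K : Type*} [Fintype ι] [DecidableEq ι] [Field K]

noncomputable def walshCoeff (f : (ι → Fin 2) → K) (T : Finset ι) : K :=
  (2 ^ Fintype.card ι)⁻¹ * ∑ σ, f σ * ∏ j ∈ T, signVec σ j

variable [NeZero (2 : K)]

theorem sum_walshCoeff_mul_prod_signVec (f : (ι → Fin 2) → K) (τ : ι → Fin 2) :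
    ∑ T, walshCoeff f T * ∏ j ∈ T, signVec τ j = f τ := by
  calc ∑ T, walshCoeff f T * ∏ j ∈ T, signVec τ j
      = (2 ^ Fintype.card ι)⁻¹ * ∑ σ, f σ * ∑ T : Finset ι, ∏ j ∈ T, signVec σ j * signVec τ j := by
        simp_rw [walshCoeff, mul_assoc, ← mul_sum, sum_mul, mul_sum, prod_mul_distrib, mul_assoc]
        rw [sum_comm]
    _ = f τ := by
        simp_rw [sum_prod_signVec_mul_signVec, mul_ite, mul_zero, sum_ite_eq', mem_univ, if_true]
        field_simp

theorem walshCoeff_eq_zero_of_even {f : (ι → Fin 2) → K} (hf : ∀ σ, f (σ + 1) = -f σ)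
    {T : Finset ι} (hT : Even T.card) : walshCoeff f T = 0 := by
  have hS : ∑ σ, f σ * ∏ j ∈ T, signVec σ j = -∑ σ, f σ * ∏ j ∈ T, signVec σ j := by
    conv_lhs => rw [← Equiv.sum_comp (Equiv.addRight (1 : ι → Fin 2))]
    simp_rw [Equiv.coe_addRight, hf, signVec_add_one, prod_neg, hT.neg_one_pow, one_mul, neg_mul,
      sum_neg_distrib]
  have h2S := add_eq_zero_iff_eq_neg.mpr hS
  rw [← two_mul, mul_eq_zero, or_iff_right two_ne_zero] at h2S
  rw [walshCoeff, h2S, mul_zero]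

end WalshFourier

namespace PhaseEncoding

open WalshFourier

variable {m : ℕ}

def twist (σ : Fin (m + 1) → Fin 2) : Fin (m + 1) → Fin 2 :=
  fun j => if j = Fin.last m then σ j else σ j + σ (Fin.last m)

lemma twist_involutive : Involutive (twist (m := m)) := by
  intro σ
  funext j
  by_cases hj : j = Fin.last m
  · simp [twist, hj]
  · simp only [twist, hj, if_false, if_true]
    generalize σ j = x
    generalize σ (Fin.last m) = y
    fin_cases x <;> fin_cases y <;> rfl

lemma twist_add_one_castSucc (σ : Fin (m + 1) → Fin 2) (i : Fin m) :
    twist (σ + 1) i.castSucc = twist σ i.castSucc := by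
  simp only [twist, (Fin.castSucc_lt_last i).ne, if_false, Pi.add_apply, Pi.one_apply]
  generalize σ i.castSucc = x
  generalize σ (Fin.last m) = y
  fin_cases x <;> fin_cases y <;> rfl

def encode : (Fin (m + 1) → Fin 2) ≃ Fin (2 ^ (m + 1)) :=
  twist_involutive.toPerm.trans finFunctionFinEquiv

section CommMonoid

variable {M : Type*} [CommMonoid M] {ζ : M}

def phase (ζ : M) (σ : Fin (m + 1) → Fin 2) : M := ζ ^ (encode σ : ℕ)

lemma phase_injective (hζ : IsPrimitiveRoot ζ (2 ^ (m + 1))) : Injective (phase (m := m) ζ) :=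
  fun σ τ h => encode.injective (Fin.ext (hζ.pow_inj (encode σ).isLt (encode τ).isLt h))

lemma range_phase (ζ : M) :
    Set.range (phase (m := m) ζ) = Set.range fun k : Fin (2 ^ (m + 1)) => ζ ^ (k : ℕ) :=
  EquivLike.range_comp (fun k : Fin (2 ^ (m + 1)) => ζ ^ (k : ℕ)) encode

end CommMonoid

variable {R : Type*} [CommRing R] [NoZeroDivisors R] {ζ : R}

lemma phase_eq_prod_mul_signVec (hζ : IsPrimitiveRoot ζ (2 ^ (m + 1))) (σ : Fin (m + 1) → Fin 2) :
    phase ζ σ = (∏ i : Fin m, ζ ^ ((twist σ i.castSucc : ℕ) * 2 ^ (i : ℕ))) *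
      signVec σ (Fin.last m) := by
  have hhalf : ζ ^ 2 ^ m = -1 :=
    (hζ.pow (by positivity) (pow_succ 2 m)).eq_neg_one_of_two_right
  rw [phase, encode, Equiv.trans_apply, finFunctionFinEquiv_apply, ← prod_pow_eq_pow_sum,
    Fin.prod_univ_castSucc]
  simp [twist, signVec, ← hhalf, ← pow_mul, mul_comm]

lemma phase_add_one (hζ : IsPrimitiveRoot ζ (2 ^ (m + 1))) (σ : Fin (m + 1) → Fin 2) :
    phase ζ (σ + 1) = -phase ζ σ := by
  simp_rw [phase_eq_prod_mul_signVec hζ, twist_add_one_castSucc, signVec_add_one, mul_neg]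

end PhaseEncoding

theorem Function.Injective.bijOn_range {α β γ : Type*} {f : α → β} {g : β → γ}
    (h : Injective (g ∘ f)) : Set.BijOn g (Set.range f) (Set.range (g ∘ f)) :=
  Set.range_comp g f ▸ h.injOn_range.bijOn_image

lemma Complex.setOf_exp_eq_range_pow (N : ℕ) :
    {z : ℂ | ∃ k : ℕ, k < N ∧ z = exp (2 * Real.pi * I * k / N)} =
      Set.range fun k : Fin N => exp (2 * Real.pi * I / N) ^ (k : ℕ) := by
  ext z
  constructor
  · rintro ⟨k, hk, rfl⟩
    exact ⟨⟨k, hk⟩, by beta_reduce; rw [← exp_nat_mul]; ring_nf⟩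
  · rintro ⟨k, rfl⟩
    exact ⟨k, k.isLt, by beta_reduce; rw [← exp_nat_mul]; ring_nf⟩

open WalshFourier PhaseEncoding in
/-- For every positive `n` there is a multilinear sign-polynomial supported on the
odd-size subsets of `{0, …, n-1}` which maps `{±1}ⁿ` bijectively onto the set of
`2ⁿ`-th roots of unity. -/
theorem phase_encoding_exists (n : ℕ) (hn : 0 < n) :
    ∃ c : Finset (Fin n) → ℂ,
      (∀ T : Finset (Fin n), ¬ Odd T.card → c T = 0) ∧
      Set.BijOn
        (fun s : Fin n → ℝ => ∑ T : Finset (Fin n), c T * ∏ j ∈ T, (s j : ℂ))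
        {s : Fin n → ℝ | ∀ i, s i = 1 ∨ s i = -1}
        {z : ℂ | ∃ k : ℕ, k < 2 ^ n ∧
          z = Complex.exp (2 * Real.pi * Complex.I * k / 2 ^ n)} := by
  obtain ⟨m, rfl⟩ : ∃ m, n = m + 1 := ⟨n - 1, by omega⟩
  have hζ := Complex.isPrimitiveRoot_exp (2 ^ (m + 1)) (by positivity)
  have htarget := Complex.setOf_exp_eq_range_pow (2 ^ (m + 1))
  push_cast at hζ htarget
  set ζ := Complex.exp (2 * Real.pi * Complex.I / 2 ^ (m + 1))
  refine ⟨walshCoeff (phase ζ), fun T hT =>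
    walshCoeff_eq_zero_of_even (phase_add_one hζ) (Nat.not_odd_iff_even.mp hT), ?_⟩
  set p := fun s : Fin (m + 1) → ℝ => ∑ T, walshCoeff (phase ζ) T * ∏ j ∈ T, (s j : ℂ)
  have hpoly : p ∘ signVec = phase ζ := by
    funext σ
    rw [comp_apply, ← sum_walshCoeff_mul_prod_signVec (phase ζ) σ]
    simp [p, signVec]
  have hbij := Injective.bijOn_range (f := signVec) (g := p) (hpoly ▸ phase_injective hζ)
  rwa [hpoly, range_phase, ← htarget, range_signVec] at hbij
end
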